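/- Let φ be the endomorphism of the free group F_n with basis a_1, ..., a_n defined by φ(a_i) = a_i^2 for every i. Then φ is injective, fix(φ) is the trivial subgroup, each of the 2n infinite reduced words a_i a_i a_i ⋯ and a_i^{-1} a_i^{-1} a_i^{-1} ⋯ (i = 1, ..., n) is an attracting fixed word of φ, these represent pairwise distinct equivalence classes, and a(φ) = 2n. -/

import Mathlib

open Filter

namespace ZZFix

/-- A letter: a basis element together with a sign. -/
abbrev Letter (α : Type*) := α × Bool

/-- The inverse letter. -/
def linv {α : Type*} (l : Letter α) : Letter α := (l.1, !l.2)

/-- An infinite reduced word: a sequence of letters with no adjacent cancellation. -/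
def InfWord (α : Type*) : Type _ := {w : ℕ → Letter α // ∀ i, w (i + 1) ≠ linv (w i)}

/-- The length-`i` prefix of an infinite reduced word, as a list of letters. -/
def prefixList {α : Type*} (W : InfWord α) (i : ℕ) : List (Letter α) :=
  (List.range i).map W.1

/-- The length-`i` prefix of an infinite reduced word, as an element of the free group. -/
def wordPrefix {α : Type*} (W : InfWord α) (i : ℕ) : FreeGroup α :=
  FreeGroup.mk (prefixList W i)

/-- Length of the longest common prefix of two lists. -/
def commonPrefixLength {β : Type*} [DecidableEq β] : List β → List β → ℕ
  | a :: as, b :: bs => if a = b then commonPrefixLength as bs + 1 else 0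
  | _, _ => 0

variable {α : Type*} [DecidableEq α]

/-- `|W ∧ g|` for an infinite reduced word `W` and a finite reduced word `g`. -/
def wedgeF (W : InfWord α) (g : FreeGroup α) : ℕ :=
  commonPrefixLength (prefixList W (FreeGroup.toWord g).length) (FreeGroup.toWord g)

/-- `|g ∧ h|` for finite reduced words. -/
def wedgeFF (g h : FreeGroup α) : ℕ :=
  commonPrefixLength (FreeGroup.toWord g) (FreeGroup.toWord h)

/-- `|W ∧ V|` for infinite reduced words, valued in `ℕ∞` (it is `⊤` iff `W = V`). -/
noncomputable def wedgeI {α : Type*} (W V : InfWord α) : ℕ∞ :=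
  sSup ((fun i : ℕ => (i : ℕ∞)) '' {i : ℕ | prefixList W i = prefixList V i})

/-- A sequence of group elements converges to the infinite reduced word `W`
(in the initial segment metric on `F ⊔ ∂F`). -/
def ConvergesTo (u : ℕ → FreeGroup α) (W : InfWord α) : Prop :=
  Tendsto (fun i => wedgeF W (u i)) atTop atTop

/-- `W` is a fixed infinite word of `φ`: `|W ∧ φ(W_i)| → ∞`. -/
def IsFixedInfWord (φ : FreeGroup α →* FreeGroup α) (W : InfWord α) : Prop :=
  Tendsto (fun i => wedgeF W (φ (wordPrefix W i))) atTop atTop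

/-- `W` is an attracting fixed word of `φ`: it is fixed and `|W ∧ φ(W_i)| - i → +∞`. -/
def IsAttractingFixedWord (φ : FreeGroup α →* FreeGroup α) (W : InfWord α) : Prop :=
  IsFixedInfWord φ W ∧
    Tendsto (fun i => (wedgeF W (φ (wordPrefix W i)) : ℤ) - (i : ℤ)) atTop atTop

/-- The fixed subgroup of an endomorphism. -/
def fixedSubgroup {G : Type*} [Group G] (φ : G →* G) : Subgroup G where
  carrier := {g | φ g = g}
  one_mem' := map_one φ
  mul_mem' := by
    intro a b ha hb
    simp only [Set.mem_setOf_eq] at *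
    rw [map_mul, ha, hb]
  inv_mem' := by
    intro a ha
    simp only [Set.mem_setOf_eq] at *
    rw [map_inv, ha]

/-- The rank (minimal number of generators) of a subgroup, valued in `ℕ∞`. -/
noncomputable def grpRank {G : Type*} [Group G] (H : Subgroup G) : ℕ∞ :=
  sInf {k : ℕ∞ | ∃ S : Finset G, Subgroup.closure (S : Set G) = H ∧ (S.card : ℕ∞) = k}

/-- Two infinite reduced words are equivalent (w.r.t. `φ`) if `W' = U·W` for some
`U ∈ fix(φ)`, i.e. the reduced products `U·W_i` converge to `W'`. -/
def EquivFixedWords (φ : FreeGroup α →* FreeGroup α) (W W' : InfWord α) : Prop :=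
  ∃ U ∈ fixedSubgroup φ, ConvergesTo (fun i => U * wordPrefix W i) W'

/-- `a(φ)`: the number of equivalence classes of attracting fixed words, in `ℕ∞`. -/
noncomputable def aCard (φ : FreeGroup α →* FreeGroup α) : ℕ∞ :=
  ENat.card (Quot fun (W W' : {W : InfWord α // IsAttractingFixedWord φ W}) =>
    EquivFixedWords φ W.1 W'.1)

/-- The inner automorphism `i_c : g ↦ c g c⁻¹`, as a monoid homomorphism. -/
def innerAut {G : Type*} [Group G] (c : G) : G →* G := (MulAut.conj c).toMonoidHom

/-- Two endomorphisms are similar if `ψ₂ = i_c ∘ ψ₁ ∘ i_c⁻¹` for some `c`. -/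
def Similar {G : Type*} [Group G] (ψ₁ ψ₂ : G →* G) : Prop :=
  ∃ c : G, ψ₂ = ((innerAut c).comp ψ₁).comp (innerAut c⁻¹)

/-- The trace of the endomorphism of `ℤⁿ` induced by `φ` on the abelianization. -/
def abTrace {n : ℕ} (φ : FreeGroup (Fin n) →* FreeGroup (Fin n)) : ℤ :=
  ∑ i : Fin n, Multiplicative.toAdd
    ((FreeGroup.lift fun k => Multiplicative.ofAdd (if k = i then (1 : ℤ) else 0))
      (φ (FreeGroup.of i)))

/-- The constant infinite reduced word `l l l ⋯`. -/
def constWord {α : Type*} (l : Letter α) : InfWord α :=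
  ⟨fun _ => l, fun _ h => by
    have h2 := congrArg Prod.snd h
    simp [linv] at h2⟩

/-- `W` is an attracting fixed point of `φ`: it is fixed, and there is `i₀` such that
every finite or infinite reduced word `V` with `|W ∧ V| ≥ i₀` satisfies
`|W ∧ φᵖ(V)| → ∞` as `p → ∞`. -/
def IsAttractingFixedPoint (φ : FreeGroup α →* FreeGroup α) (W : InfWord α) : Prop :=
  IsFixedInfWord φ W ∧
    ∃ i₀ : ℕ,
      (∀ g : FreeGroup α, i₀ ≤ wedgeF W g →
        Tendsto (fun p => wedgeF W ((⇑φ)^[p] g)) atTop atTop) ∧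
      (∀ V : InfWord α, (i₀ : ℕ∞) ≤ wedgeI W V →
        ∀ Vs : ℕ → InfWord α, Vs 0 = V →
          (∀ p, ConvergesTo (fun i => φ (wordPrefix (Vs p) i)) (Vs (p + 1))) →
          Tendsto (fun p => wedgeI W (Vs p)) atTop atTop)

open scoped Classical in
/-- The initial segment metric. -/
noncomputable def distIS {α : Type*} (W V : InfWord α) : ℝ :=
  if W = V then 0 else 1 / (1 + ((wedgeI W V).toNat : ℝ))


end ZZFix

/-! On reduced words `φ` doubles every letter, and a doubled reduced word is again reduced. So `φ`
is injective and doubles the length of every element, whence `fix(φ) = 1` and equivalence of fixed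
words is plain equality. If `W` is a fixed infinite word, the reduced word `φ(W_i)`, of length `2i`,
is eventually a long prefix of `W`; comparing letters gives `w_k = w_{⌊k/2⌋}`, so `W` is constant.
Conversely `|a^∞ ∧ φ(a^i)| = 2i`, so every constant word is attracting, and the classes are in
bijection with the `2n` letters `a_i^{±1}`. -/

namespace ZZFix

section CommonPrefix

variable {β : Type*} [DecidableEq β]

theorem commonPrefixLength_self : ∀ l : List β, commonPrefixLength l l = l.length
  | [] => rfl
  | _ :: l => by simp [commonPrefixLength, commonPrefixLength_self l]

theorem commonPrefixLength_le_length_left :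
    ∀ l l' : List β, commonPrefixLength l l' ≤ l.length
  | [], l' => by cases l' <;> simp [commonPrefixLength]
  | _ :: _, [] => by simp [commonPrefixLength]
  | _ :: l, _ :: l' => by
    have := commonPrefixLength_le_length_left l l'
    simp only [commonPrefixLength, List.length_cons]
    split_ifs <;> omega

theorem getElem?_eq_of_lt_commonPrefixLength :
    ∀ {l l' : List β} {k : ℕ}, k < commonPrefixLength l l' → l[k]? = l'[k]?
  | a :: l, b :: l', k, h => by
    simp only [commonPrefixLength] at h
    split_ifs at h with hab
    · cases k with
      | zero => simp [hab]
      | succ k => simpa using getElem?_eq_of_lt_commonPrefixLength (l := l) (l' := l') (by omega)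
    · omega
  | [], _, _, h | _ :: _, [], _, h => by simp [commonPrefixLength] at h

end CommonPrefix

section DoubleLetters

variable {β : Type*}

def doubleLetters (l : List β) : List β := l.flatMap fun x => [x, x]

@[simp] theorem length_doubleLetters (l : List β) : (doubleLetters l).length = 2 * l.length := by
  induction l with
  | nil => rfl
  | cons _ l ih => simp [doubleLetters] at ih ⊢; omega

theorem getElem?_doubleLetters : ∀ (l : List β) (k : ℕ), (doubleLetters l)[k]? = l[k / 2]?
  | [], _ => by simp [doubleLetters]
  | _ :: _, 0 | _ :: _, 1 => by simp [doubleLetters]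
  | _ :: l, k + 2 => by
    rw [show (k + 2) / 2 = k / 2 + 1 by omega]
    simpa [doubleLetters] using getElem?_doubleLetters l k

theorem doubleLetters_injective : Function.Injective (doubleLetters (β := β)) := fun _ _ h =>
  List.ext_getElem? fun k => by
    simpa [getElem?_doubleLetters] using congrArg (·[2 * k]?) h

theorem doubleLetters_replicate (m : ℕ) (x : β) :
    doubleLetters (List.replicate m x) = List.replicate (2 * m) x := by
  rw [doubleLetters, List.flatMap_replicate, show [x, x] = List.replicate 2 x from rfl,
    List.flatten_replicate_replicate, Nat.mul_comm]

theorem isReduced_doubleLetters {l : List (β × Bool)} (h : FreeGroup.IsReduced l) :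
    FreeGroup.IsReduced (doubleLetters l) := by
  rw [FreeGroup.IsReduced, doubleLetters, List.flatMap_def, List.isChain_flatten (by simp)]
  refine ⟨fun _ hl => ?_, (List.isChain_map _).2 (h.imp fun a b hab => by simpa using hab)⟩
  obtain ⟨x, -, rfl⟩ := List.mem_map.1 hl
  simp

end DoubleLetters

section InfWord

variable {α : Type*}

theorem getElem?_prefixList (W : InfWord α) (i k : ℕ) :
    (prefixList W i)[k]? = if k < i then some (W.1 k) else none := by
  split_ifs with hk
  · simp [prefixList, List.getElem?_range hk]
  · simp [prefixList, hk]

@[simp] theorem length_prefixList (W : InfWord α) (i : ℕ) : (prefixList W i).length = i := by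
  simp [prefixList]

theorem apply_eq_of_getElem?_prefixList_eq_some {W : InfWord α} {i k : ℕ} {x : Letter α}
    (h : (prefixList W i)[k]? = some x) : W.1 k = x := by
  rw [getElem?_prefixList] at h
  split_ifs at h
  exact Option.some_injective _ h

theorem isReduced_prefixList (W : InfWord α) (i : ℕ) : FreeGroup.IsReduced (prefixList W i) := by
  rw [FreeGroup.IsReduced, prefixList, List.isChain_map, List.isChain_range]
  intro m _ h₁
  by_contra h₂
  exact W.2 m (Prod.ext h₁.symm (Bool.eq_not.2 (Ne.symm h₂)))

theorem prefixList_constWord (l : Letter α) (i : ℕ) :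
    prefixList (constWord l) i = List.replicate i l := by
  simp [prefixList, constWord, List.map_const']

theorem constWord_injective : Function.Injective (constWord (α := α)) := fun _ _ h =>
  congrArg (fun W : InfWord α => W.1 0) h

theorem eq_constWord_of_forall_apply_eq {W : InfWord α} (h : ∀ k, W.1 k = W.1 0) :
    W = constWord (W.1 0) :=
  Subtype.ext (funext h)

variable [DecidableEq α]

theorem toWord_wordPrefix (W : InfWord α) (i : ℕ) : (wordPrefix W i).toWord = prefixList W i := by
  rw [wordPrefix, FreeGroup.toWord_mk, (isReduced_prefixList W i).reduce_eq]

theorem getElem?_toWord_of_lt_wedgeF {W : InfWord α} {g : FreeGroup α} {k : ℕ}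
    (h : k < wedgeF W g) : g.toWord[k]? = some (W.1 k) := by
  have hk := h.trans_le (commonPrefixLength_le_length_left _ _)
  rw [length_prefixList] at hk
  rw [← getElem?_eq_of_lt_commonPrefixLength h, getElem?_prefixList, if_pos hk]

theorem wedgeF_of_toWord_eq_prefixList {W : InfWord α} {g : FreeGroup α} {m : ℕ}
    (h : g.toWord = prefixList W m) : wedgeF W g = m := by
  rw [wedgeF, h, length_prefixList, commonPrefixLength_self, length_prefixList]

theorem convergesTo_wordPrefix_iff {W W' : InfWord α} :
    ConvergesTo (wordPrefix W) W' ↔ W = W' := by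
  constructor
  · intro h
    refine Subtype.ext (funext fun k => ?_)
    obtain ⟨i, hi⟩ := (h.eventually (eventually_gt_atTop k)).exists
    have hk := getElem?_toWord_of_lt_wedgeF hi
    rw [toWord_wordPrefix] at hk
    exact apply_eq_of_getElem?_prefixList_eq_some hk
  · rintro rfl
    simp only [ConvergesTo, wedgeF_of_toWord_eq_prefixList (toWord_wordPrefix W _)]
    exact tendsto_id

theorem equivFixedWords_iff_eq {φ : FreeGroup α →* FreeGroup α} (hfix : fixedSubgroup φ = ⊥)
    {W W' : InfWord α} : EquivFixedWords φ W W' ↔ W = W' := by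
  simp only [EquivFixedWords, hfix, Subgroup.mem_bot, exists_eq_left, one_mul]
  exact convergesTo_wordPrefix_iff

end InfWord

theorem quot_mk_injective {β : Type*} {r : β → β → Prop} (h : ∀ a b, r a b → a = b) :
    Function.Injective (Quot.mk r) := fun _ _ hab =>
  congrArg (Quot.lift id h) hab

theorem aCard_eq_card_of_fixedSubgroup_eq_bot {α : Type*} [DecidableEq α]
    {φ : FreeGroup α →* FreeGroup α} (hfix : fixedSubgroup φ = ⊥) :
    aCard φ = ENat.card {W : InfWord α // IsAttractingFixedWord φ W} :=
  ENat.card_congr (Equiv.ofBijective _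
    ⟨quot_mk_injective fun _ _ h => Subtype.ext ((equivFixedWords_iff_eq hfix).1 h),
      Quot.mk_surjective⟩).symm

section Squaring

open FreeGroup

variable {α : Type*} {φ : FreeGroup α →* FreeGroup α} (hφ : ∀ a, φ (of a) = of a ^ 2)
include hφ

theorem map_mk_singleton_of_sq (x : Letter α) : φ (mk [x]) = mk [x, x] := by
  have hsq : φ (mk [x]) = mk [x] ^ 2 := by
    obtain ⟨a, _ | _⟩ := x
    · change φ (of a)⁻¹ = (of a)⁻¹ ^ 2
      rw [_root_.map_inv, hφ, inv_pow]
    · exact hφ a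
  rw [hsq, sq, mul_mk]
  rfl

theorem map_mk_of_sq : ∀ l : List (Letter α), φ (mk l) = mk (doubleLetters l)
  | [] => map_one φ
  | x :: l => by
    rw [← List.singleton_append, ← mul_mk, _root_.map_mul, map_mk_singleton_of_sq hφ, map_mk_of_sq l,
      mul_mk]
    rfl

variable [DecidableEq α]

theorem toWord_map_of_sq (g : FreeGroup α) : (φ g).toWord = doubleLetters g.toWord := by
  conv_lhs => rw [← mk_toWord (x := g)]
  rw [map_mk_of_sq hφ, toWord_mk, (isReduced_doubleLetters isReduced_toWord).reduce_eq]

theorem injective_of_sq : Function.Injective φ := fun g h hgh =>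
  toWord_injective (doubleLetters_injective (by rw [← toWord_map_of_sq hφ, hgh,
    toWord_map_of_sq hφ]))

theorem fixedSubgroup_eq_bot_of_sq : fixedSubgroup φ = ⊥ := by
  refine (Subgroup.eq_bot_iff_forall _).2 fun g (hg : φ g = g) => ?_
  have hlen := congrArg List.length (toWord_map_of_sq hφ g)
  rw [hg, length_doubleLetters] at hlen
  exact toWord_eq_nil_iff.1 (List.length_eq_zero_iff.1 (by omega))

theorem wedgeF_map_wordPrefix_constWord_of_sq (l : Letter α) (m : ℕ) :
    wedgeF (constWord l) (φ (wordPrefix (constWord l) m)) = 2 * m := by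
  apply wedgeF_of_toWord_eq_prefixList
  rw [toWord_map_of_sq hφ, toWord_wordPrefix, prefixList_constWord, prefixList_constWord,
    doubleLetters_replicate]

theorem isAttractingFixedWord_constWord_of_sq (l : Letter α) :
    IsAttractingFixedWord φ (constWord l) := by
  simp only [IsAttractingFixedWord, IsFixedInfWord, wedgeF_map_wordPrefix_constWord_of_sq hφ]
  constructor
  · exact tendsto_id.const_mul_atTop' two_pos
  · refine tendsto_natCast_atTop_atTop.congr fun m => ?_
    push_cast
    ring

theorem IsFixedInfWord.apply_eq_apply_half_of_sq {W : InfWord α} (hW : IsFixedInfWord φ W)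
    (k : ℕ) : W.1 k = W.1 (k / 2) := by
  obtain ⟨i, hi⟩ := (hW.eventually (eventually_gt_atTop k)).exists
  have hk := getElem?_toWord_of_lt_wedgeF hi
  rw [toWord_map_of_sq hφ, getElem?_doubleLetters, toWord_wordPrefix] at hk
  exact (apply_eq_of_getElem?_prefixList_eq_some hk).symm

theorem IsFixedInfWord.eq_constWord_of_sq {W : InfWord α} (hW : IsFixedInfWord φ W) :
    W = constWord (W.1 0) := by
  refine eq_constWord_of_forall_apply_eq fun k => ?_
  induction k using Nat.strong_induction_on with
  | _ k ih =>
    rcases k with _ | k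
    · rfl
    · rw [hW.apply_eq_apply_half_of_sq hφ, ih _ (by omega)]

def attractingFixedWordEquivLetterOfSq : {W : InfWord α // IsAttractingFixedWord φ W} ≃ Letter α where
  toFun W := W.1.1 0
  invFun l := ⟨constWord l, isAttractingFixedWord_constWord_of_sq hφ l⟩
  left_inv W := Subtype.ext (W.2.1.eq_constWord_of_sq hφ).symm
  right_inv _ := rfl

end Squaring

theorem stmt14_general {n : ℕ} (φ : FreeGroup (Fin n) →* FreeGroup (Fin n))
    (hφdef : ∀ i : Fin n, φ (FreeGroup.of i) = FreeGroup.of i ^ 2) :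
    Function.Injective φ ∧
    fixedSubgroup φ = ⊥ ∧
    (∀ (i : Fin n) (b : Bool), IsAttractingFixedWord φ (constWord (i, b))) ∧
    (∀ (i j : Fin n) (b b' : Bool), (i, b) ≠ (j, b') →
      ¬ EquivFixedWords φ (constWord (i, b)) (constWord (j, b'))) ∧
    aCard φ = 2 * (n : ℕ∞) := by
  have hfix := fixedSubgroup_eq_bot_of_sq hφdef
  refine ⟨injective_of_sq hφdef, hfix, fun i b => isAttractingFixedWord_constWord_of_sq hφdef _,
    fun i j b b' hne h => hne (constWord_injective ((equivFixedWords_iff_eq hfix).1 h)), ?_⟩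
  rw [aCard_eq_card_of_fixedSubgroup_eq_bot hfix,
    ENat.card_congr (attractingFixedWordEquivLetterOfSq hφdef), ENat.card_eq_coe_fintype_card,
    Fintype.card_prod, Fintype.card_fin, Fintype.card_bool]
  push_cast
  ring

/-- Example 6.1: for `φ(a_i) = a_i²`, `φ` is injective, its fixed
subgroup is trivial, each `a_i^{±∞}` is an attracting fixed word, these are pairwise
inequivalent, and `a(φ) = 2n`. -/
theorem stmt14 {n : ℕ} (hn : 1 ≤ n) (φ : FreeGroup (Fin n) →* FreeGroup (Fin n))
    (hφdef : ∀ i : Fin n, φ (FreeGroup.of i) = FreeGroup.of i ^ 2) :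
    Function.Injective φ ∧
    fixedSubgroup φ = ⊥ ∧
    (∀ (i : Fin n) (b : Bool), IsAttractingFixedWord φ (constWord (i, b))) ∧
    (∀ (i j : Fin n) (b b' : Bool), (i, b) ≠ (j, b') →
      ¬ EquivFixedWords φ (constWord (i, b)) (constWord (j, b'))) ∧
    aCard φ = 2 * (n : ℕ∞) :=
  stmt14_general φ hφdef

end ZZFix
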